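/- arXiv:1708.02266 — 3 statements merged into one kernel-verified Lean document; each statement's English description precedes it below -/
import Mathlib

section
/- For all 0 < λ < 1 and all positive integers n and d, the tail of the negative binomial distribution with d failures and success probability λ satisfies P(W > n) ≤ 1 − (1 − λ^{n/d})^d; equivalently, ∑_{k=0}^{n} C(k+d−1, d−1) λ^k (1−λ)^d ≥ (1 − λ^{n/d})^d. -/
/-!
Put `m = ⌊n/d⌋`, so that `λ^{n/d} ≥ λ^{m+1}` and `1 - λ^{m+1} = (1 - λ)(1 + λ + ⋯ + λ^m)`.
In the expansion of `(1 + λ + ⋯ + λ^m)^d` the coefficient of `λ^k` counts the compositions of `k`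
into `d` parts of size at most `m`; this is at most the number `C(k+d-1, d-1)` of all
compositions, and only exponents `k ≤ dm ≤ n` occur.
-/

open Finset

section ChooseSeries

variable {x : ℝ}

theorem sum_choose_succ_mul_pow_eq_sum_mul_geom_sum (e M : ℕ) :
    ∑ t ∈ range M, ((t + e + 1).choose (e + 1) : ℝ) * x ^ t =
      ∑ k ∈ range M, ((k + e).choose e : ℝ) * x ^ k * ∑ j ∈ range (M - k), x ^ j := by
  have hpascal (t : ℕ) :
      ((t + e + 1).choose (e + 1) : ℝ) = ∑ k ∈ range (t + 1), ((k + e).choose e : ℝ) := by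
    rw [← Nat.sum_range_add_choose, Nat.cast_sum]
  calc ∑ t ∈ range M, ((t + e + 1).choose (e + 1) : ℝ) * x ^ t
      = ∑ t ∈ Ico 0 M, ∑ k ∈ Ico 0 (t + 1), ((k + e).choose e : ℝ) * x ^ t := by
        simp only [hpascal, sum_mul, range_eq_Ico]
    _ = ∑ k ∈ Ico 0 M, ∑ t ∈ Ico k M, ((k + e).choose e : ℝ) * x ^ t :=
        (sum_Ico_Ico_comm 0 M _).symm
    _ = _ := by
        simp only [← range_eq_Ico, sum_Ico_eq_sum_range, pow_add, mul_sum, mul_assoc]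

theorem geom_sum_monotone (hx : 0 ≤ x) : Monotone fun n => ∑ j ∈ range n, x ^ j :=
  fun _ _ h => sum_le_sum_of_subset_of_nonneg (range_subset_range.2 h) fun j _ _ => pow_nonneg hx j

theorem sum_choose_mul_pow_mul_geom_sum_le (hx : 0 ≤ x) (e N m : ℕ) :
    (∑ k ∈ range (N + 1), ((k + e).choose e : ℝ) * x ^ k) * ∑ j ∈ range (m + 1), x ^ j ≤
      ∑ k ∈ range (N + m + 1), ((k + e + 1).choose (e + 1) : ℝ) * x ^ k := by
  rw [sum_choose_succ_mul_pow_eq_sum_mul_geom_sum, sum_mul]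
  calc ∑ k ∈ range (N + 1), ((k + e).choose e : ℝ) * x ^ k * ∑ j ∈ range (m + 1), x ^ j
      ≤ ∑ k ∈ range (N + 1), ((k + e).choose e : ℝ) * x ^ k *
          ∑ j ∈ range (N + m + 1 - k), x ^ j := by
        refine sum_le_sum fun k hk => mul_le_mul_of_nonneg_left ?_ (by positivity)
        exact geom_sum_monotone hx (by simp at hk; omega)
    _ ≤ ∑ k ∈ range (N + m + 1), ((k + e).choose e : ℝ) * x ^ k *
          ∑ j ∈ range (N + m + 1 - k), x ^ j :=
        sum_le_sum_of_subset_of_nonneg (range_subset_range.2 (by omega))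
          fun k _ _ => mul_nonneg (by positivity) (sum_nonneg fun j _ => pow_nonneg hx j)

theorem geom_sum_pow_le_sum_choose_mul_pow (hx : 0 ≤ x) (m e : ℕ) :
    (∑ j ∈ range (m + 1), x ^ j) ^ (e + 1) ≤
      ∑ k ∈ range ((e + 1) * m + 1), ((k + e).choose e : ℝ) * x ^ k := by
  induction e with
  | zero => simp
  | succ e ih =>
    calc (∑ j ∈ range (m + 1), x ^ j) ^ (e + 2)
        = (∑ j ∈ range (m + 1), x ^ j) ^ (e + 1) * ∑ j ∈ range (m + 1), x ^ j := pow_succ _ _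
      _ ≤ (∑ k ∈ range ((e + 1) * m + 1), ((k + e).choose e : ℝ) * x ^ k) *
            ∑ j ∈ range (m + 1), x ^ j :=
        mul_le_mul_of_nonneg_right ih (sum_nonneg fun j _ => pow_nonneg hx j)
      _ ≤ ∑ k ∈ range ((e + 1) * m + m + 1), ((k + e + 1).choose (e + 1) : ℝ) * x ^ k :=
        sum_choose_mul_pow_mul_geom_sum_le hx e _ m
      _ = ∑ k ∈ range ((e + 2) * m + 1), ((k + (e + 1)).choose (e + 1) : ℝ) * x ^ k := by
        rw [show (e + 1) * m + m = (e + 2) * m by ring]; rfl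

end ChooseSeries

theorem negBinomial_tail_general (lam : ℝ) (hlam0 : 0 < lam) (hlam1 : lam < 1)
    (n d : ℕ) (hd : 0 < d) :
    (1 - lam ^ ((n : ℝ) / (d : ℝ))) ^ d ≤
      ∑ k ∈ Finset.range (n + 1),
        ((k + d - 1).choose (d - 1) : ℝ) * lam ^ k * (1 - lam) ^ d := by
  obtain ⟨e, rfl⟩ : ∃ e, d = e + 1 := ⟨d - 1, by omega⟩
  set m := n / (e + 1)
  have hexp : (n : ℝ) / (e + 1 : ℕ) ≤ (m + 1 : ℕ) := by
    rw [div_le_iff₀ (by positivity)]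
    exact_mod_cast (Nat.lt_mul_div_succ n e.succ_pos).le.trans_eq (mul_comm _ _)
  have hpow : lam ^ (m + 1) ≤ lam ^ ((n : ℝ) / (e + 1 : ℕ)) := by
    rw [← Real.rpow_natCast]
    exact Real.rpow_le_rpow_of_exponent_ge hlam0 hlam1.le hexp
  have hle_one : lam ^ ((n : ℝ) / (e + 1 : ℕ)) ≤ 1 :=
    Real.rpow_le_one hlam0.le hlam1.le (by positivity)
  have hcompl : 0 ≤ 1 - lam := by linarith
  calc (1 - lam ^ ((n : ℝ) / (e + 1 : ℕ))) ^ (e + 1)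
      ≤ ((1 - lam) * ∑ j ∈ range (m + 1), lam ^ j) ^ (e + 1) := by
        rw [mul_neg_geom_sum]; gcongr
    _ ≤ (1 - lam) ^ (e + 1) * ∑ k ∈ range ((e + 1) * m + 1), ((k + e).choose e : ℝ) * lam ^ k := by
        rw [mul_pow]
        exact mul_le_mul_of_nonneg_left (geom_sum_pow_le_sum_choose_mul_pow hlam0.le m e)
          (pow_nonneg hcompl _)
    _ ≤ (1 - lam) ^ (e + 1) * ∑ k ∈ range (n + 1), ((k + e).choose e : ℝ) * lam ^ k := by
        gcongr
        exact Nat.mul_div_le n (e + 1)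
    _ = _ := by simp only [Nat.add_sub_cancel, ← add_assoc, mul_sum, mul_comm]

/-- Negative binomial tail inequality: for `0 < λ < 1` and positive integers `n, d`,
`∑_{k=0}^{n} C(k+d−1, d−1) λ^k (1−λ)^d ≥ (1 − λ^{n/d})^d`, where `λ^{n/d}` is a real power. -/
theorem negBinomial_tail (lam : ℝ) (hlam0 : 0 < lam) (hlam1 : lam < 1)
    (n d : ℕ) (hn : 0 < n) (hd : 0 < d) :
    (1 - lam ^ ((n : ℝ) / (d : ℝ))) ^ d ≤
      ∑ k ∈ Finset.range (n + 1),
        ((k + d - 1).choose (d - 1) : ℝ) * lam ^ k * (1 - lam) ^ d :=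
  negBinomial_tail_general lam hlam0 hlam1 n d hd
end

section
/- Let (b_k) be a sequence of integers with b_k ≥ 1 for all k ≥ 1, let δ > 0, and let α be real with √δ ≤ |α| ≤ 1/2. Then with m = ⌈1/(2|α|) + 1/δ⌉, one has 2 ∑_{k=1}^∞ b_k e^{−kδ} sin²(π k α) ≥ e^{−(√δ/2 + 1 + δ)} δ^{−1}. -/
/-!
Truncate the series at `m = ⌈1/(4|α|) + 1/δ⌉`. On the first `m` terms `b_k ≥ 1` and
`e^{-kδ} ≥ e^{-mδ}`, so the series is at least `e^{-mδ} ∑_{k ≤ m} sin²(πkα)`. The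
Karatsuba–Voronin inequality `2 ∑_{k ≤ m} sin²(πkα) ≥ m - 1/(4|α|) ≥ 1/δ`, from the Dirichlet
kernel bound on `∑ cos(2πkα)`, and `mδ ≤ √δ/2 + 1 + δ` (using `δ/|α| ≤ √δ`) finish the proof.
-/

open Real Finset

theorem sum_range_cos_mul_two_sin (x : ℝ) (m : ℕ) :
    (∑ k ∈ range m, cos (2 * ((k : ℝ) + 1) * x)) * (2 * sin x) =
      sin ((2 * m + 1) * x) - sin x := by
  have hstep (k : ℕ) : cos (2 * ((k : ℝ) + 1) * x) * (2 * sin x) =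
      sin ((2 * ((k + 1 : ℕ) : ℝ) + 1) * x) - sin ((2 * (k : ℝ) + 1) * x) := by
    rw [sin_sub_sin]
    push_cast
    ring_nf
  rw [sum_mul, sum_congr rfl fun k _ => hstep k,
    sum_range_sub (fun k : ℕ => sin ((2 * (k : ℝ) + 1) * x))]
  simp

theorem sum_range_cos_le (x : ℝ) (hx : 0 < sin x) (m : ℕ) :
    ∑ k ∈ range m, cos (2 * ((k : ℝ) + 1) * x) ≤ 1 / (2 * sin x) := by
  rw [le_div_iff₀ (by positivity), sum_range_cos_mul_two_sin]
  linarith [sin_le_one ((2 * m + 1) * x)]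

theorem sub_le_two_mul_sum_range_sin_sq (x : ℝ) (hx : 0 < sin x) (m : ℕ) :
    m - 1 / (2 * sin x) ≤ 2 * ∑ k ∈ range m, sin (((k : ℝ) + 1) * x) ^ 2 := by
  have hsq (k : ℕ) : 2 * sin (((k : ℝ) + 1) * x) ^ 2 = 1 - cos (2 * ((k : ℝ) + 1) * x) := by
    rw [mul_assoc, cos_two_mul, cos_sq']
    ring
  rw [mul_sum, sum_congr rfl fun k _ => hsq k, sum_sub_distrib]
  simp only [sum_const, card_range, nsmul_eq_mul, mul_one]
  linarith [sum_range_cos_le x hx m]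

theorem karatsuba_voronin (α : ℝ) (hα0 : α ≠ 0) (hα : |α| ≤ 1 / 2) (m : ℕ) :
    m - 1 / (4 * |α|) ≤ 2 * ∑ k ∈ range m, sin (π * ((k : ℝ) + 1) * α) ^ 2 := by
  have hα_pos : 0 < |α| := abs_pos.2 hα0
  have hsin : 2 * |α| ≤ sin (π * |α|) := by
    have := mul_le_sin (x := π * |α|) (by positivity) (by nlinarith [pi_pos])
    rwa [← mul_assoc, div_mul_cancel₀ _ pi_ne_zero] at this
  have heven (k : ℕ) : sin (π * ((k : ℝ) + 1) * α) ^ 2 = sin (((k : ℝ) + 1) * (π * |α|)) ^ 2 := by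
    rcases abs_choice α with h | h <;> simp only [h, mul_neg, sin_neg, neg_sq] <;> ring_nf
  simp only [heven]
  refine le_trans ?_ (sub_le_two_mul_sum_range_sin_sq _ (by linarith) m)
  gcongr ?_ - 1 / ?_
  linarith

theorem exp_neg_mul_sum_le_sum_weighted {m : ℕ} {δ : ℝ} (hδ : 0 ≤ δ) {w s : ℕ → ℝ}
    (hw : ∀ k < m, 1 ≤ w k) (hs : ∀ k, 0 ≤ s k) :
    exp (-m * δ) * ∑ k ∈ range m, s k ≤ ∑ k ∈ range m, w k * exp (-((k : ℝ) + 1) * δ) * s k := by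
  rw [mul_sum]
  refine sum_le_sum fun k hk => ?_
  have hkm : (k : ℝ) + 1 ≤ m := by exact_mod_cast mem_range.1 hk
  have hexp : exp (-m * δ) ≤ exp (-((k : ℝ) + 1) * δ) := exp_le_exp.2 (by nlinarith)
  have hwexp : exp (-m * δ) ≤ w k * exp (-((k : ℝ) + 1) * δ) := by
    nlinarith [hw k (mem_range.1 hk), exp_pos (-((k : ℝ) + 1) * δ)]
  exact mul_le_mul_of_nonneg_right hwexp (hs k)

theorem natCeil_inv_add_inv_mul_le {a δ : ℝ} (hδ : 0 < δ) (ha : √δ ≤ a) :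
    (⌈1 / (4 * a) + 1 / δ⌉₊ : ℝ) * δ ≤ √δ / 4 + 1 + δ := by
  have hsqrt : 0 < √δ := sqrt_pos.2 hδ
  have ha0 : 0 < a := hsqrt.trans_le ha
  have hceil := (Nat.ceil_lt_add_one (by positivity : 0 ≤ 1 / (4 * a) + 1 / δ)).le
  have hδa : δ / (4 * a) ≤ √δ / 4 := by
    rw [div_le_div_iff₀ (by positivity) (by norm_num)]
    nlinarith [mul_self_sqrt hδ.le]
  calc (⌈1 / (4 * a) + 1 / δ⌉₊ : ℝ) * δ ≤ (1 / (4 * a) + 1 / δ + 1) * δ := by gcongr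
    _ = δ / (4 * a) + 1 + δ := by field_simp
    _ ≤ √δ / 4 + 1 + δ := by linarith

/-- For an integer sequence `b_k ≥ 1` (`k ≥ 1`), `δ > 0`, and `√δ ≤ |α| ≤ 1/2`,
`2 ∑_{k≥1} b_k e^{−kδ} sin²(π k α) ≥ e^{−(√δ/2 + 1 + δ)} δ^{−1}`.
The (possibly infinite) sum of nonnegative terms is taken in `ℝ≥0∞`. -/
theorem khintchine_condition_III (b : ℕ → ℤ) (hb : ∀ k, 1 ≤ k → 1 ≤ b k)
    (δ : ℝ) (hδ : 0 < δ) (α : ℝ) (hα1 : Real.sqrt δ ≤ |α|) (hα2 : |α| ≤ 1 / 2) :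
    ENNReal.ofReal (Real.exp (-(Real.sqrt δ / 2 + 1 + δ)) * δ⁻¹) ≤
      2 * ∑' k : ℕ,
        ENNReal.ofReal
          ((b (k + 1) : ℝ) * Real.exp (-((k : ℝ) + 1) * δ) *
            Real.sin (π * ((k : ℝ) + 1) * α) ^ 2) := by
  set f : ℕ → ℝ := fun k =>
    (b (k + 1) : ℝ) * exp (-((k : ℝ) + 1) * δ) * sin (π * ((k : ℝ) + 1) * α) ^ 2
  have hb' (k : ℕ) : (1 : ℝ) ≤ b (k + 1) := by exact_mod_cast hb (k + 1) k.succ_pos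
  have hf (k : ℕ) : 0 ≤ f k := by have := hb' k; positivity
  have hα0 : α ≠ 0 := abs_pos.1 ((sqrt_pos.2 hδ).trans_le hα1)
  set m := ⌈1 / (4 * |α|) + 1 / δ⌉₊
  have hm : 1 / δ ≤ m - 1 / (4 * |α|) := by linarith [Nat.le_ceil (1 / (4 * |α|) + 1 / δ)]
  have hmδ : -(√δ / 2 + 1 + δ) ≤ -m * δ := by
    linarith [natCeil_inv_add_inv_mul_le hδ hα1, sqrt_nonneg δ]
  have htrunc : exp (-(√δ / 2 + 1 + δ)) * δ⁻¹ ≤ 2 * ∑ k ∈ range m, f k :=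
    calc exp (-(√δ / 2 + 1 + δ)) * δ⁻¹
        ≤ exp (-m * δ) * (2 * ∑ k ∈ range m, sin (π * ((k : ℝ) + 1) * α) ^ 2) := by
          rw [← one_div]
          gcongr
          exact hm.trans (karatsuba_voronin α hα0 hα2 m)
      _ ≤ 2 * ∑ k ∈ range m, f k := by
          rw [mul_left_comm]
          gcongr
          exact exp_neg_mul_sum_le_sum_weighted hδ.le (fun k _ => hb' k) fun k => sq_nonneg _
  calc ENNReal.ofReal (exp (-(√δ / 2 + 1 + δ)) * δ⁻¹)
      ≤ ENNReal.ofReal (2 * ∑ k ∈ range m, f k) := ENNReal.ofReal_le_ofReal htrunc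
    _ = 2 * ∑ k ∈ range m, ENNReal.ofReal (f k) := by
        rw [ENNReal.ofReal_mul zero_le_two, ENNReal.ofReal_sum_of_nonneg fun k _ => hf k]
        simp
    _ ≤ 2 * ∑' k, ENNReal.ofReal (f k) := by gcongr; exact ENNReal.sum_le_tsum _
end

section
/- Fix 0 < λ < 1 and a positive integer d, and let f(λ) = 1 − I_λ(n+1, d)/(1 − (1−λ)^d), where I_λ(a,b) is the regularized incomplete beta function. Then for every integer k ≥ 1, f(λ^k) ≥ f(λ); equivalently, I_{λ^k}(n+1,d)/(1 − (1−λ^k)^d) ≤ I_λ(n+1,d)/(1 − (1−λ)^d). -/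
/-- The regularized incomplete beta function `I_x(a, b)` for positive integer parameters:
`I_x(a,b) = ∫_0^x t^{a−1}(1−t)^{b−1} dt / ∫_0^1 t^{a−1}(1−t)^{b−1} dt`. -/
noncomputable def regIncBeta (x : ℝ) (a b : ℕ) : ℝ :=
  (∫ t in (0 : ℝ)..x, t ^ (a - 1) * (1 - t) ^ (b - 1)) /
    (∫ t in (0 : ℝ)..1, t ^ (a - 1) * (1 - t) ^ (b - 1))

/-!
Since `d ∫_0^x (1-t)^{d-1} dt = 1 - (1-x)^d`, the ratio `I_x(n+1,d) / (1 - (1-x)^d)` is, up to a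
positive constant, the average of the increasing function `t^n` over `[0, x]` against the weight
`(1-t)^{d-1}`. Such a running weighted average of an increasing function is increasing in `x`,
and `λ^k ≤ λ`.
-/

open MeasureTheory intervalIntegral Set

section WeightedAverage

variable {f w : ℝ → ℝ} {a b c : ℝ}

theorem integral_mul_le_const_mul_integral (hab : a ≤ b) (hf : ∀ t ∈ Ioo a b, f t ≤ c)
    (hw : ∀ t ∈ Ioo a b, 0 ≤ w t) (hfw : IntervalIntegrable (fun t => f t * w t) volume a b)
    (hwi : IntervalIntegrable w volume a b) :
    ∫ t in a..b, f t * w t ≤ c * ∫ t in a..b, w t := by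
  rw [← intervalIntegral.integral_const_mul]
  exact integral_mono_on_of_le_Ioo hab hfw (hwi.const_mul c) fun t ht =>
    mul_le_mul_of_nonneg_right (hf t ht) (hw t ht)

theorem const_mul_integral_le_integral_mul (hab : a ≤ b) (hf : ∀ t ∈ Ioo a b, c ≤ f t)
    (hw : ∀ t ∈ Ioo a b, 0 ≤ w t) (hfw : IntervalIntegrable (fun t => f t * w t) volume a b)
    (hwi : IntervalIntegrable w volume a b) :
    c * ∫ t in a..b, w t ≤ ∫ t in a..b, f t * w t := by
  rw [← intervalIntegral.integral_const_mul]
  exact integral_mono_on_of_le_Ioo hab (hwi.const_mul c) hfw fun t ht =>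
    mul_le_mul_of_nonneg_right (hf t ht) (hw t ht)

theorem monotoneOn_integral_mul_div_integral (hf : MonotoneOn f (Ioc a b))
    (hw : ∀ t ∈ Ioo a b, 0 < w t) (hfw : IntervalIntegrable (fun t => f t * w t) volume a b)
    (hwi : IntervalIntegrable w volume a b) :
    MonotoneOn (fun x => (∫ t in a..x, f t * w t) / ∫ t in a..x, w t) (Ioc a b) := by
  rintro x ⟨hax, hxb⟩ y ⟨-, hyb⟩ hxy
  have hsub {u v : ℝ} (hau : a ≤ u) (huv : u ≤ v) (hvb : v ≤ b) : uIcc u v ⊆ uIcc a b := by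
    rw [uIcc_of_le huv, uIcc_of_le (hau.trans (huv.trans hvb))]
    exact Icc_subset_Icc hau hvb
  have hfw_ax := hfw.mono_set (hsub le_rfl hax.le hxb)
  have hfw_xy := hfw.mono_set (hsub hax.le hxy hyb)
  have hwi_ax := hwi.mono_set (hsub le_rfl hax.le hxb)
  have hwi_xy := hwi.mono_set (hsub hax.le hxy hyb)
  have hw_ax : ∀ t ∈ Ioo a x, 0 < w t := fun t ht => hw t ⟨ht.1, ht.2.trans_le hxb⟩
  have hw_xy : ∀ t ∈ Ioo x y, 0 ≤ w t := fun t ht =>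
    (hw t ⟨hax.trans ht.1, ht.2.trans_le hyb⟩).le
  have hW_pos : 0 < ∫ t in a..x, w t := intervalIntegral_pos_of_pos_on hwi_ax hw_ax hax
  have hW_xy : 0 ≤ ∫ t in x..y, w t := by
    simpa using integral_mono_on_of_le_Ioo hxy intervalIntegrable_const hwi_xy hw_xy
  have hF_ax := integral_mul_le_const_mul_integral hax.le
    (fun t ht => hf ⟨ht.1, ht.2.le.trans hxb⟩ ⟨hax, hxb⟩ ht.2.le)
    (fun t ht => (hw_ax t ht).le) hfw_ax hwi_ax
  have hF_xy := const_mul_integral_le_integral_mul hxy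
    (fun t ht => hf ⟨hax, hxb⟩ ⟨hax.trans ht.1, ht.2.le.trans hyb⟩ ht.1.le)
    hw_xy hfw_xy hwi_xy
  dsimp only
  rw [← integral_add_adjacent_intervals hfw_ax hfw_xy,
    ← integral_add_adjacent_intervals hwi_ax hwi_xy,
    div_le_div_iff₀ hW_pos (add_pos_of_pos_of_nonneg hW_pos hW_xy)]
  -- `(∫_a^x f w) (∫_x^y w) ≤ f x (∫_a^x w) (∫_x^y w) ≤ (∫_x^y f w) (∫_a^x w)`
  nlinarith

end WeightedAverage

theorem integral_one_sub_pow_pred {d : ℕ} (hd : 0 < d) (x : ℝ) :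
    ∫ t in (0 : ℝ)..x, (1 - t) ^ (d - 1) = (1 - (1 - x) ^ d) / d := by
  rw [intervalIntegral.integral_comp_sub_left (fun s => s ^ (d - 1)), integral_pow,
    Nat.sub_add_cancel hd, Nat.cast_pred hd]
  simp

theorem regIncBeta_div_eq (x : ℝ) (n : ℕ) {d : ℕ} (hd : 0 < d) :
    regIncBeta x (n + 1) d / (1 - (1 - x) ^ d) =
      ((∫ t in (0 : ℝ)..x, t ^ n * (1 - t) ^ (d - 1)) /
          ∫ t in (0 : ℝ)..x, (1 - t) ^ (d - 1)) /
        (d * ∫ t in (0 : ℝ)..1, t ^ n * (1 - t) ^ (d - 1)) := by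
  rw [regIncBeta, integral_one_sub_pow_pred hd, Nat.add_sub_cancel]
  field_simp

theorem monotoneOn_regIncBeta_div (n : ℕ) {d : ℕ} (hd : 0 < d) :
    MonotoneOn (fun x => regIncBeta x (n + 1) d / (1 - (1 - x) ^ d)) (Ioc 0 1) := by
  have hpow : MonotoneOn (fun t : ℝ => t ^ n) (Ioc 0 1) := fun s hs t _ hst =>
    pow_le_pow_left₀ hs.1.le hst n
  have hweight : ∀ t ∈ Ioo (0 : ℝ) 1, 0 < (1 - t) ^ (d - 1) := fun t ht =>
    pow_pos (sub_pos.2 ht.2) _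
  have hbeta : 0 ≤ ∫ t in (0 : ℝ)..1, t ^ n * (1 - t) ^ (d - 1) :=
    integral_nonneg zero_le_one fun t ht =>
      mul_nonneg (pow_nonneg ht.1 n) (pow_nonneg (sub_nonneg.2 ht.2) _)
  have haverage := monotoneOn_integral_mul_div_integral hpow hweight
    (Continuous.intervalIntegrable (by fun_prop) _ _)
    (Continuous.intervalIntegrable (by fun_prop) _ _)
  intro x hx y hy hxy
  simp only [regIncBeta_div_eq _ n hd]
  gcongr ?_ / _
  exact haverage hx hy hxy

/-- For `0 < λ < 1`, `d ≥ 1`, and `f(x) = 1 − I_x(n+1, d)/(1 − (1−x)^d)`, one has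
`f(λ^k) ≥ f(λ)` for every integer `k ≥ 1`; equivalently
`I_{λ^k}(n+1,d)/(1 − (1−λ^k)^d) ≤ I_λ(n+1,d)/(1 − (1−λ)^d)`. -/
theorem truncated_negBinomial_monotone (lam : ℝ) (h0 : 0 < lam) (h1 : lam < 1)
    (d : ℕ) (hd : 0 < d) (n : ℕ) (k : ℕ) (hk : 1 ≤ k) :
    (1 - regIncBeta lam (n + 1) d / (1 - (1 - lam) ^ d)) ≤
      (1 - regIncBeta (lam ^ k) (n + 1) d / (1 - (1 - lam ^ k) ^ d)) ∧
    regIncBeta (lam ^ k) (n + 1) d / (1 - (1 - lam ^ k) ^ d) ≤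
      regIncBeta lam (n + 1) d / (1 - (1 - lam) ^ d) := by
  have hratio := monotoneOn_regIncBeta_div n hd ⟨pow_pos h0 k, pow_le_one₀ h0.le h1.le⟩
    ⟨h0, h1.le⟩ (pow_le_of_le_one h0.le h1.le (by omega))
  exact ⟨sub_le_sub_left hratio 1, hratio⟩
end
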